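/- If x_S maximizes the Sharpe ratio (f_f - f_1(x))/f_2(x) over all x (where f_2(x) > 0 for all x and f_f > f_1(x) for all x), then x_S is a Pareto minimizer of the bi-objective problem min (f_1, f_2); that is, there is no x with f_1(x) < f_1(x_S) and f_2(x) < f_2(x_S). -/

import Mathlib

theorem sub_div_lt_sub_div_of_lt_of_lt {c a a' b b' : ℝ} (ha : a' < a) (hb : b' < b)
    (hb' : 0 < b') (hac : a < c) : (c - a) / b < (c - a') / b' :=
  div_lt_div₀ (by linarith) hb.le (by linarith) hb'

/-- The Sharpe predictor is a Pareto minimizer: if `x_S` maximizes the Sharpe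
ratio `(f_f - f_1 x) / f_2 x`, then no `x` dominates `x_S`. -/
theorem sharpe_predictor_pareto {n : ℕ} (f₁ f₂ : (Fin n → ℝ) → ℝ) (ff : ℝ)
    (hf₂ : ∀ x, 0 < f₂ x) (hff : ∀ x, f₁ x < ff) (xS : Fin n → ℝ)
    (hmax : ∀ x, (ff - f₁ x) / f₂ x ≤ (ff - f₁ xS) / f₂ xS) :
    ¬ ∃ x, f₁ x < f₁ xS ∧ f₂ x < f₂ xS := by
  rintro ⟨x, h₁, h₂⟩
  exact (hmax x).not_gt (sub_div_lt_sub_div_of_lt_of_lt h₁ h₂ (hf₂ x) (hff xS))
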